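/- arXiv:1511.06974 — 6 statements merged into one kernel-verified Lean document; each statement's English description precedes it below -/
import Mathlib

section
/- Let P ⊆ 2^[n] be a family of subsets partitioned into pairwise disjoint intervals [F_i, G_i], i = 1,…,r, where [F,G] = {H : F ⊆ H ⊆ G}, and suppose |G_i| ≥ d for all i. Define α_k = |{A ∈ P : |A| = k}|, β_0 = α_0, and β_k = α_k - Σ_{j=0}^{k-1} β_j · C(d-j, k-j) for 1 ≤ k ≤ d. Then β_k ≥ 0 for all 0 ≤ k ≤ d. -/
/-!
Read with `d` fixed, the recursion says `α_k = ∑_{j ≤ k} β_j C(d-j, k-j)` for `k ≤ d`: the level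
profile of `P` up to level `d` is written as a combination of profiles of intervals `[F', G']`
with `|G'| = d`, `|F'| = j`. This unitriangular system is linear and `α` is additive over the
partition, so it suffices to solve it for one interval `[F, G]` with `|F| = f`, `|G| = d + m`.
There the solution is `β_j = multichoose m (j - f) ≥ 0`, by the identity
`∑_s multichoose m s · C(D - s, t - s) = C(m + D, t)`, a coefficient of
`(1 - X)^(-m) (1 - X)^(-(D - t + 1)) = (1 - X)^(-(m + D - t + 1))`.
-/

open Finset PowerSeries

theorem PowerSeries.coeff_invOneSubPow (m n : ℕ) :
    coeff n (invOneSubPow ℤ m : ℤ⟦X⟧) = m.multichoose n := by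
  cases m with
  | zero => cases n <;> simp [invOneSubPow_zero, coeff_one]
  | succ m =>
    rw [invOneSubPow_val_succ_eq_mk_add_choose, coeff_mk, Nat.multichoose_eq,
      add_right_comm, Nat.add_sub_cancel, Nat.choose_symm_add]

theorem Nat.sum_antidiagonal_multichoose_mul (m k t : ℕ) :
    ∑ ij ∈ antidiagonal t, m.multichoose ij.1 * k.multichoose ij.2 = (m + k).multichoose t := by
  have h := congrArg (coeff t) (congrArg Units.val (invOneSubPow_add (S := ℤ) m k))
  rw [Units.val_mul, coeff_mul] at h
  simp only [coeff_invOneSubPow] at h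
  exact_mod_cast h.symm

theorem Nat.sum_range_multichoose_mul_choose {t D : ℕ} (m : ℕ) (h : t ≤ D) :
    ∑ s ∈ range (t + 1), m.multichoose s * (D - s).choose (t - s) = (m + D).choose t := by
  have key := Nat.sum_antidiagonal_multichoose_mul m (D - t + 1) t
  rw [Nat.sum_antidiagonal_eq_sum_range_succ_mk] at key
  convert key using 1
  · refine sum_congr rfl fun s hs => ?_
    have : s ≤ t := Nat.lt_succ_iff.mp (mem_range.mp hs)
    rw [Nat.multichoose_eq (D - t + 1)]
    congr 2
    omega
  · rw [Nat.multichoose_eq]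
    congr 1
    omega

theorem Finset.card_Icc_filter_card_eq {α : Type*} [DecidableEq α] {s t : Finset α} (h : s ⊆ t)
    (k : ℕ) : #{u ∈ Icc s t | #u = k} = if #s ≤ k then (#t - #s).choose (k - #s) else 0 := by
  split_ifs with hk
  · rw [← card_sdiff_of_subset h, ← card_powersetCard]
    refine card_nbij' (· \ s) (s ∪ ·) ?_ ?_ ?_ ?_
    · intro u hu
      simp only [mem_coe, mem_filter, mem_Icc, mem_powersetCard] at hu ⊢
      exact ⟨sdiff_subset_sdiff hu.1.2 subset_rfl, by rw [card_sdiff_of_subset hu.1.1, hu.2]⟩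
    · intro v hv
      simp only [mem_coe, mem_filter, mem_Icc, mem_powersetCard] at hv ⊢
      have hdisj : Disjoint s v := disjoint_of_subset_right hv.1 disjoint_sdiff
      refine ⟨⟨subset_union_left, union_subset h (hv.1.trans sdiff_subset)⟩, ?_⟩
      rw [card_union_of_disjoint hdisj, hv.2]
      omega
    · intro u hu
      simp only [mem_coe, mem_filter, mem_Icc] at hu
      exact union_sdiff_of_subset hu.1.1
    · intro v hv
      simp only [mem_coe, mem_powersetCard] at hv
      exact union_sdiff_cancel_left (disjoint_of_subset_right hv.1 disjoint_sdiff)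
  · refine card_eq_zero.mpr (filter_eq_empty_iff.mpr fun u hu hk' => hk ?_)
    exact hk' ▸ card_le_card (mem_Icc.mp hu).1

def intervalBeta (f m j : ℕ) : ℕ := if f ≤ j then m.multichoose (j - f) else 0

theorem choose_eq_sum_intervalBeta_mul_choose (f m : ℕ) {d k : ℕ} (hk : k ≤ d) :
    (if f ≤ k then (d + m - f).choose (k - f) else 0) =
      ∑ j ∈ range (k + 1), intervalBeta f m j * (d - j).choose (k - j) := by
  unfold intervalBeta
  split_ifs with hfk
  · rw [show k + 1 = f + (k - f + 1) by omega, sum_range_add, sum_eq_zero, zero_add]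
    · rw [show d + m - f = m + (d - f) by omega,
        ← Nat.sum_range_multichoose_mul_choose m (show k - f ≤ d - f by omega)]
      refine sum_congr rfl fun s _ => ?_
      rw [if_pos (Nat.le_add_right f s), Nat.add_sub_cancel_left, Nat.sub_add_eq, Nat.sub_add_eq]
    · intro j hj
      rw [if_neg (by simp at hj; omega), zero_mul]
  · refine (sum_eq_zero fun j hj => ?_).symm
    rw [if_neg (by simp at hj; omega), zero_mul]

theorem eq_of_unitriangular_recursion {R : Type*} [CommRing R] {a : ℕ → ℕ → R}
    (ha : ∀ k, a k k = 1) {d : ℕ} {α β γ : ℕ → R}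
    (hα : ∀ k ≤ d, α k = ∑ j ∈ range (k + 1), γ j * a j k)
    (hβ : ∀ k ≤ d, β k = α k - ∑ j ∈ range k, β j * a j k) :
    ∀ k ≤ d, β k = γ k := by
  intro k
  induction k using Nat.strong_induction_on with
  | _ k ih =>
    intro hk
    have hlower : ∑ j ∈ range k, β j * a j k = ∑ j ∈ range k, γ j * a j k :=
      sum_congr rfl fun j hj => by rw [ih j (mem_range.mp hj) (by simp at hj; omega)]
    rw [hβ k hk, hα k hk, sum_range_succ, ha, mul_one, hlower, add_sub_cancel_left]

theorem card_filter_card_eq_sum_intervalBeta {α : Type*} [DecidableEq α] {F G : Finset α}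
    (h : F ⊆ G) {d k : ℕ} (hd : d ≤ #G) (hk : k ≤ d) :
    #{A ∈ Icc F G | #A = k} =
      ∑ j ∈ range (k + 1), intervalBeta #F (#G - d) j * (d - j).choose (k - j) := by
  rw [card_Icc_filter_card_eq h, ← choose_eq_sum_intervalBeta_mul_choose _ _ hk,
    Nat.add_sub_cancel' hd]

theorem stmt2 (n d r : ℕ) (P : Finset (Finset (Fin n)))
    (F G : Fin r → Finset (Fin n))
    (hFG : ∀ i, F i ⊆ G i)
    (hdisj : ∀ i j, i ≠ j → Disjoint (Finset.Icc (F i) (G i)) (Finset.Icc (F j) (G j)))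
    (hcover : ∀ A, A ∈ P ↔ ∃ i, A ∈ Finset.Icc (F i) (G i))
    (hGd : ∀ i, d ≤ (G i).card)
    (α : ℕ → ℤ) (hα : ∀ k, α k = ((P.filter (fun A => A.card = k)).card : ℤ))
    (β : ℕ → ℤ) (hβ0 : β 0 = α 0)
    (hβ : ∀ k, 1 ≤ k → k ≤ d →
      β k = α k - ∑ j ∈ Finset.range k, β j * ((d - j).choose (k - j) : ℤ)) :
    ∀ k ≤ d, 0 ≤ β k := by
  have hP : P = univ.biUnion fun i => Icc (F i) (G i) := by
    ext A
    simpa using hcover A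
  have hαsum (k : ℕ) : α k = ∑ i, (#{A ∈ Icc (F i) (G i) | #A = k} : ℤ) := by
    rw [hα, hP, filter_biUnion, card_biUnion fun i _ j _ hij =>
      disjoint_filter_filter (hdisj i j hij), Nat.cast_sum]
  have hrec : ∀ k ≤ d, β k = α k - ∑ j ∈ range k, β j * ((d - j).choose (k - j) : ℤ) := by
    rintro (_ | k) hk
    · simp [hβ0]
    · exact hβ _ k.succ_pos hk
  have hβsum : ∀ k ≤ d, β k = ∑ i, (intervalBeta #(F i) (#(G i) - d) k : ℤ) := by
    refine eq_of_unitriangular_recursion (by simp) (fun k hk => ?_) hrec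
    simp_rw [hαsum, card_filter_card_eq_sum_intervalBeta (hFG _) (hGd _) hk, sum_mul]
    push_cast
    exact sum_comm
  intro k hk
  rw [hβsum k hk]
  positivity
end

section
/- Let P' = {F ⊆ [n] : |F| ≤ m-1} for some 1 ≤ m ≤ n. Then P' admits a partition into intervals [F_i, G_i] with |G_i| ≥ m-1 for all i; i.e., sdepth(P') ≥ m-1. -/
open Finset

lemma key_partition {α : Type*} [DecidableEq α] (s : Finset α) : ∀ k ≤ s.card,
    ∃ I : Finset (Finset α × Finset α),
      (∀ p ∈ I, p.1 ⊆ p.2 ∧ p.2 ⊆ s ∧ p.2.card = k) ∧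
      (∀ p ∈ I, ∀ q ∈ I, p ≠ q → Disjoint (Finset.Icc p.1 p.2) (Finset.Icc q.1 q.2)) ∧
      (∀ A : Finset α, (A ⊆ s ∧ A.card ≤ k) ↔ ∃ p ∈ I, A ∈ Finset.Icc p.1 p.2) := by
  induction s using Finset.strongInduction with
  | _ s ih =>
    intro k hk
    rcases Nat.eq_zero_or_pos k with rfl | hk0
    · -- k = 0 : single interval [∅, ∅]
      refine ⟨{(∅, ∅)}, by simp, by simp, fun A => ?_⟩
      constructor
      · rintro ⟨-, hA⟩
        exact ⟨(∅, ∅), by simp, by simpa using Finset.card_eq_zero.mp (Nat.le_zero.mp hA)⟩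
      · rintro ⟨p, hp, hA⟩
        simp only [Finset.mem_singleton] at hp
        subst hp
        simp only [Finset.mem_Icc] at hA
        have : A = ∅ := Finset.subset_empty.mp hA.2
        simp [this]
    rcases eq_or_lt_of_le hk with heq | hlt
    · -- k = s.card : single interval [∅, s]
      refine ⟨{(∅, s)}, by simp [heq], by simp, fun A => ?_⟩
      constructor
      · rintro ⟨hA, -⟩
        exact ⟨(∅, s), by simp, by simpa [Finset.mem_Icc] using hA⟩
      · rintro ⟨p, hp, hA⟩
        simp only [Finset.mem_singleton] at hp
        subst hp
        simp only [Finset.mem_Icc] at hA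
        exact ⟨hA.2, heq ▸ Finset.card_le_card hA.2⟩
    · -- 0 < k < s.card
      obtain ⟨k', rfl⟩ : ∃ k', k = k' + 1 := ⟨k - 1, (Nat.succ_pred_eq_of_pos hk0).symm⟩
      have hs : s.Nonempty := Finset.card_pos.mp (by omega)
      obtain ⟨x, hx⟩ := hs
      set t := s.erase x with ht
      have htcard : t.card = s.card - 1 := Finset.card_erase_of_mem hx
      have htss : t ⊂ s := Finset.erase_ssubset hx
      have hk1 : k' + 1 ≤ t.card := by omega
      have hk2 : k' ≤ t.card := by omega
      obtain ⟨I₁, h₁a, h₁b, h₁c⟩ := ih t htss (k' + 1) hk1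
      obtain ⟨I₂, h₂a, h₂b, h₂c⟩ := ih t htss k' hk2
      have hxt : x ∉ t := Finset.notMem_erase x s
      have hts : t ⊆ s := Finset.erase_subset x s
      -- for intervals in I₂, x is in neither endpoint
      have hx2 : ∀ r ∈ I₂, x ∉ r.1 ∧ x ∉ r.2 := by
        intro r hr
        obtain ⟨h1, h2, _⟩ := h₂a r hr
        exact ⟨fun h => hxt (h2 (h1 h)), fun h => hxt (h2 h)⟩
      -- erasing x maps the shifted intervals back
      have herase : ∀ r ∈ I₂, ∀ A : Finset α,
          A ∈ Finset.Icc (insert x r.1) (insert x r.2) → A.erase x ∈ Finset.Icc r.1 r.2 := by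
        intro r hr A hA
        rw [Finset.mem_Icc] at hA ⊢
        obtain ⟨h1, h2⟩ := hA
        constructor
        · intro y hy
          refine Finset.mem_erase.mpr ⟨fun e => (hx2 r hr).1 (e ▸ hy), h1 (Finset.mem_insert_of_mem hy)⟩
        · intro y hy
          obtain ⟨hyx, hyA⟩ := Finset.mem_erase.mp hy
          rcases Finset.mem_insert.mp (h2 hyA) with rfl | h
          · exact absurd rfl hyx
          · exact h
      refine ⟨I₁ ∪ I₂.image (fun p => (insert x p.1, insert x p.2)), ?_, ?_, ?_⟩
      · intro p hp
        rcases Finset.mem_union.mp hp with hp | hp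
        · exact ⟨(h₁a p hp).1, (h₁a p hp).2.1.trans hts, (h₁a p hp).2.2⟩
        · obtain ⟨q, hq, rfl⟩ := Finset.mem_image.mp hp
          obtain ⟨hq1, hq2, hq3⟩ := h₂a q hq
          refine ⟨Finset.insert_subset_insert x hq1, Finset.insert_subset hx (hq2.trans hts), ?_⟩
          rw [Finset.card_insert_of_notMem (hx2 q hq).2, hq3]
      · -- disjointness
        intro p hp q hq hpq
        have mem_nox : ∀ r ∈ I₁, ∀ A ∈ Finset.Icc r.1 r.2, x ∉ A := by
          intro r hr A hA hxA
          exact hxt ((h₁a r hr).2.1 ((Finset.mem_Icc.mp hA).2 hxA))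
        have mem_x : ∀ r ∈ I₂.image (fun p => (insert x p.1, insert x p.2)),
            ∀ A ∈ Finset.Icc r.1 r.2, x ∈ A := by
          intro r hr A hA
          obtain ⟨r', hr', rfl⟩ := Finset.mem_image.mp hr
          exact (Finset.mem_Icc.mp hA).1 (Finset.mem_insert_self x r'.1)
        rcases Finset.mem_union.mp hp with hp1 | hp2 <;>
          rcases Finset.mem_union.mp hq with hq1 | hq2
        · exact h₁b p hp1 q hq1 hpq
        · exact Finset.disjoint_left.mpr fun A hA hA' =>
            (mem_nox p hp1 A hA) (mem_x q hq2 A hA')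
        · exact Finset.disjoint_left.mpr fun A hA hA' =>
            (mem_nox q hq1 A hA') (mem_x p hp2 A hA)
        · obtain ⟨p', hp', hpe⟩ := Finset.mem_image.mp hp2
          obtain ⟨q', hq', hqe⟩ := Finset.mem_image.mp hq2
          have hne : p' ≠ q' := by rintro rfl; exact hpq (hpe ▸ hqe ▸ rfl)
          refine Finset.disjoint_left.mpr fun A hA hA' => ?_
          subst hpe; subst hqe
          exact Finset.disjoint_left.mp (h₂b p' hp' q' hq' hne)
            (herase p' hp' A hA) (herase q' hq' A hA')
      · -- covering
        intro A
        constructor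
        · rintro ⟨hAs, hAc⟩
          by_cases hxA : x ∈ A
          · have h1 : A.erase x ⊆ t := Finset.erase_subset_erase x hAs
            have h2 : (A.erase x).card ≤ k' := by
              rw [Finset.card_erase_of_mem hxA]; omega
            obtain ⟨p, hp, hAp⟩ := (h₂c (A.erase x)).mp ⟨h1, h2⟩
            refine ⟨(insert x p.1, insert x p.2), Finset.mem_union_right _
              (Finset.mem_image.mpr ⟨p, hp, rfl⟩), ?_⟩
            rw [Finset.mem_Icc] at hAp ⊢
            constructor
            · exact Finset.insert_subset hxA (hAp.1.trans (Finset.erase_subset x A))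
            · intro y hy
              by_cases hyx : y = x
              · exact hyx ▸ Finset.mem_insert_self x p.2
              · exact Finset.mem_insert_of_mem (hAp.2 (Finset.mem_erase.mpr ⟨hyx, hy⟩))
          · have h1 : A ⊆ t := fun y hy =>
              Finset.mem_erase.mpr ⟨fun e => hxA (e ▸ hy), hAs hy⟩
            obtain ⟨p, hp, hAp⟩ := (h₁c A).mp ⟨h1, hAc⟩
            exact ⟨p, Finset.mem_union_left _ hp, hAp⟩
        · rintro ⟨p, hp, hAp⟩
          rcases Finset.mem_union.mp hp with hp1 | hp2
          · obtain ⟨-, h2, h3⟩ := h₁a p hp1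
            have hA2 := (Finset.mem_Icc.mp hAp).2
            exact ⟨hA2.trans (h2.trans hts), h3 ▸ Finset.card_le_card hA2⟩
          · obtain ⟨p', hp', rfl⟩ := Finset.mem_image.mp hp2
            obtain ⟨-, h2, h3⟩ := h₂a p' hp'
            have hA2 := (Finset.mem_Icc.mp hAp).2
            have hsub : insert x p'.2 ⊆ s := Finset.insert_subset hx (h2.trans hts)
            have hcard : (insert x p'.2).card = k' + 1 := by
              rw [Finset.card_insert_of_notMem (hx2 p' hp').2, h3]
            exact ⟨hA2.trans hsub, hcard ▸ Finset.card_le_card hA2⟩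

def IsIntervalPartition (n : ℕ) (P : Finset (Finset (Fin n)))
    (I : Finset (Finset (Fin n) × Finset (Fin n))) : Prop :=
  (∀ p ∈ I, p.1 ⊆ p.2) ∧
  (∀ p ∈ I, ∀ q ∈ I, p ≠ q → Disjoint (Finset.Icc p.1 p.2) (Finset.Icc q.1 q.2)) ∧
  (∀ A, A ∈ P ↔ ∃ p ∈ I, A ∈ Finset.Icc p.1 p.2)

noncomputable def sdepth (n : ℕ) (P : Finset (Finset (Fin n))) : ℕ :=
  sSup {d | d ≤ n ∧ ∃ I, IsIntervalPartition n P I ∧ ∀ p ∈ I, d ≤ p.2.card}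

theorem stmt4 (n m : ℕ) (hm1 : 1 ≤ m) (hmn : m ≤ n) :
    m - 1 ≤ sdepth n ((Finset.univ.powerset).filter (fun F : Finset (Fin n) => F.card ≤ m - 1)) := by
  obtain ⟨I, ha, hb, hc⟩ := key_partition (Finset.univ : Finset (Fin n)) (m - 1)
    (by rw [Finset.card_univ, Fintype.card_fin]; omega)
  apply le_csSup ⟨n, fun d hd => hd.1⟩
  refine ⟨by omega, I, ⟨fun p hp => (ha p hp).1, hb, fun A => ?_⟩,
    fun p hp => (ha p hp).2.2.ge⟩
  constructor
  · intro h
    exact (hc A).mp ⟨Finset.subset_univ A, (Finset.mem_filter.mp h).2⟩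
  · intro h
    exact Finset.mem_filter.mpr ⟨Finset.mem_powerset.mpr (Finset.subset_univ A),
      ((hc A).mpr h).2⟩
end

section
/- Let I ⊂ S = K[x_1,…,x_n] be a squarefree monomial ideal generated in degree m < n with g minimal generators, and let d be such that C(n+m-d-1, m) < g. Then for the poset P_{S/I} of subsets of [n] not containing the support of any generator, the quantity β_m = C(n+m-d-1, m) - g is negative, hence sdepth(P_{S/I}) ≤ d - 1. -/
/-- Key combinatorial identity:
`∑_{i≤k} C(e+i-1, i) C(d-i, k-i) = C(d+e, k)` for `k ≤ d`. -/
lemma key_choose_identity : ∀ (e : ℕ), ∀ (k d : ℕ), k ≤ d →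
    ∑ i ∈ Finset.range (k+1), (e + i - 1).choose i * ((d - i).choose (k - i)) = (d + e).choose k := by
  intro e
  induction e with
  | zero =>
    intro k d hk
    rw [Finset.sum_eq_single 0]
    · simp
    · intro i hi h0
      have h : (0 + i - 1).choose i = 0 := Nat.choose_eq_zero_of_lt (by omega)
      rw [h, Nat.zero_mul]
    · simp
  | succ e ih =>
    intro k
    induction k with
    | zero => intro d hk; simp
    | succ k ihk =>
      intro d hk
      have e1 : ∑ i ∈ Finset.range (k+1+1), (e+1+i-1).choose i * ((d-i).choose (k+1-i))
          = (∑ j ∈ Finset.range (k+1), ((e+(j+1)-1).choose (j+1) * ((d-(j+1)).choose (k+1-(j+1)))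
              + (e+1+j-1).choose j * (((d-1)-j).choose (k-j))))
            + (e+1+0-1).choose 0 * ((d-0).choose (k+1-0)) := by
        rw [Finset.sum_range_succ']
        congr 1
        apply Finset.sum_congr rfl
        intro j _
        have h1 : e+1+(j+1)-1 = (e+j)+1 := by omega
        have h2 : e+(j+1)-1 = e+j := by omega
        have h3 : e+1+j-1 = e+j := by omega
        have h4 : d-(j+1) = d-1-j := by omega
        have h5 : k+1-(j+1) = k-j := by omega
        rw [h1, h2, h3, h4, h5, Nat.choose_succ_succ, add_mul, Nat.succ_eq_add_one]
        ring
      rw [e1, Finset.sum_add_distrib]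
      have hA : (∑ j ∈ Finset.range (k+1), (e+(j+1)-1).choose (j+1) * ((d-(j+1)).choose (k+1-(j+1))))
          + (e+0-1).choose 0 * ((d-0).choose (k+1-0)) = (d+e).choose (k+1) := by
        have h := ih (k+1) d hk
        rw [Finset.sum_range_succ'] at h
        exact h
      have hB : ∑ j ∈ Finset.range (k+1), (e+1+j-1).choose j * (((d-1)-j).choose (k-j))
          = ((d-1)+(e+1)).choose k := ihk (d-1) (by omega)
      have hf0 : (e+1+0-1).choose 0 * ((d-0).choose (k+1-0))
          = (e+0-1).choose 0 * ((d-0).choose (k+1-0)) := by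
        simp
      rw [hB, hf0]
      have hP : (d+(e+1)).choose (k+1) = (d+e).choose (k+1) + (d+e).choose k := by
        have h : d+(e+1) = (d+e)+1 := by omega
        rw [h, Nat.choose_succ_succ, Nat.succ_eq_add_one]
        exact Nat.add_comm _ _
      have hD : (d-1)+(e+1) = d+e := by omega
      rw [hD, hP, ← hA]
      ring

lemma shiftSum (a K : ℕ) (g : ℕ → ℕ) :
    ∑ j ∈ Finset.range (K+1), (if a ≤ j then g j else 0) = ∑ i ∈ Finset.range (K+1-a), g (a+i) := by
  rw [← Finset.sum_filter]
  have h : (Finset.range (K+1)).filter (fun j => a ≤ j) = Finset.Ico a (K+1) := by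
    ext x
    simp only [Finset.mem_filter, Finset.mem_range, Finset.mem_Ico]
    omega
  rw [h, Finset.sum_Ico_eq_sum_range]

/-- Number of sets of size `k` in the interval `[A, B]`. -/
lemma iccCount {n : ℕ} (A B : Finset (Fin n)) (hAB : A ⊆ B) (k : ℕ) :
    ((Finset.Icc A B).filter (fun C => C.card = k)).card =
    if A.card ≤ k then (B.card - A.card).choose (k - A.card) else 0 := by
  split_ifs with h
  · rw [← Finset.card_sdiff_of_subset hAB, ← Finset.card_powersetCard]
    apply Finset.card_bij' (fun C _ => C \ A) (fun D _ => D ∪ A)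
    · intro C hC
      simp only [Finset.mem_filter, Finset.mem_Icc] at hC
      obtain ⟨⟨h1, h2⟩, h3⟩ := hC
      simp only [Finset.mem_powersetCard]
      constructor
      · exact Finset.sdiff_subset_sdiff h2 (le_refl A)
      · rw [Finset.card_sdiff_of_subset h1, h3]
    · intro D hD
      simp only [Finset.mem_powersetCard] at hD
      obtain ⟨h1, h2⟩ := hD
      have hDB : D ⊆ B := h1.trans Finset.sdiff_subset
      have hdisj : Disjoint D A := Finset.disjoint_of_subset_left h1 Finset.sdiff_disjoint
      simp only [Finset.mem_filter, Finset.mem_Icc]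
      refine ⟨⟨Finset.subset_union_right, Finset.union_subset hDB hAB⟩, ?_⟩
      rw [Finset.card_union_of_disjoint hdisj, h2]
      omega
    · intro C hC
      simp only [Finset.mem_filter, Finset.mem_Icc] at hC
      exact Finset.sdiff_union_of_subset hC.1.1
    · intro D hD
      simp only [Finset.mem_powersetCard] at hD
      have hdisj : Disjoint D A := Finset.disjoint_of_subset_left hD.1 Finset.sdiff_disjoint
      rw [Finset.union_sdiff_right, Finset.sdiff_eq_self_of_disjoint hdisj]
  · rw [Finset.filter_eq_empty_iff.mpr, Finset.card_empty]
    intro C hC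
    rw [Finset.mem_Icc] at hC
    have := Finset.card_le_card hC.1
    omega

/-- The main counting argument: a poset with `C(n,k)` elements of size `k` for `k < m` and
`C(n,m) - g` elements of size `m` admits no interval partition with all tops of size `≥ d`
when `C(n-d+m-1, m) < g`. -/
lemma noPartition {n m d g : ℕ} (P : Finset (Finset (Fin n)))
    (halpha_lt : ∀ k, k < m → (P.filter (fun C => C.card = k)).card = n.choose k)
    (halpha_m : (P.filter (fun C => C.card = m)).card + g = n.choose m)
    (hmd : m ≤ d) (hdn : d ≤ n)
    (hd : (n - d + m - 1).choose m < g)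
    (J : Finset (Finset (Fin n) × Finset (Fin n)))
    (hsub : ∀ p ∈ J, p.1 ⊆ p.2)
    (hdisj : ∀ p ∈ J, ∀ q ∈ J, p ≠ q → Disjoint (Finset.Icc p.1 p.2) (Finset.Icc q.1 q.2))
    (hmem : ∀ A, A ∈ P ↔ ∃ p ∈ J, A ∈ Finset.Icc p.1 p.2)
    (htops : ∀ p ∈ J, d ≤ p.2.card) : False := by
  have hpart : ∀ k : ℕ, (P.filter (fun C => C.card = k)).card
      = ∑ p ∈ J, ((Finset.Icc p.1 p.2).filter (fun C => C.card = k)).card := by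
    intro k
    have hbU : P.filter (fun C => C.card = k)
        = J.biUnion (fun p => (Finset.Icc p.1 p.2).filter (fun C => C.card = k)) := by
      ext C
      constructor
      · intro hC
        rw [Finset.mem_filter] at hC
        obtain ⟨p, hp, hCp⟩ := (hmem C).mp hC.1
        rw [Finset.mem_biUnion]
        exact ⟨p, hp, Finset.mem_filter.mpr ⟨hCp, hC.2⟩⟩
      · intro hC
        rw [Finset.mem_biUnion] at hC
        obtain ⟨p, hp, hCp⟩ := hC
        rw [Finset.mem_filter] at hCp ⊢
        exact ⟨(hmem C).mpr ⟨p, hp, hCp.1⟩, hCp.2⟩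
    rw [hbU]
    apply Finset.card_biUnion
    intro p hp q hq hpq
    exact Finset.disjoint_filter_filter (hdisj p hp q hq hpq)
  have hGamma : ∀ k, k ≤ m →
      ∑ j ∈ Finset.range (k+1),
        (∑ p ∈ J, if p.1.card ≤ j then
            ((p.2.card - d + (j - p.1.card) - 1).choose (j - p.1.card)) else 0)
          * ((d-j).choose (k-j))
      = (P.filter (fun C => C.card = k)).card := by
    intro k hk
    rw [hpart k]
    have hswap : ∑ j ∈ Finset.range (k+1),
        (∑ p ∈ J, if p.1.card ≤ j then
            ((p.2.card - d + (j - p.1.card) - 1).choose (j - p.1.card)) else 0)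
          * ((d-j).choose (k-j))
        = ∑ p ∈ J, ∑ j ∈ Finset.range (k+1),
            (if p.1.card ≤ j then
              ((p.2.card - d + (j - p.1.card) - 1).choose (j - p.1.card)) else 0)
              * ((d-j).choose (k-j)) := by
      rw [Finset.sum_comm]
      apply Finset.sum_congr rfl
      intro j _
      rw [Finset.sum_mul]
    rw [hswap]
    apply Finset.sum_congr rfl
    intro p hp
    rw [iccCount p.1 p.2 (hsub p hp) k]
    have hb : d ≤ p.2.card := htops p hp
    by_cases hak : p.1.card ≤ k
    · rw [if_pos hak]
      simp only [ite_mul, zero_mul]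
      rw [shiftSum]
      have hr : k+1-p.1.card = (k-p.1.card)+1 := by omega
      rw [hr]
      have hkey := key_choose_identity (p.2.card - d) (k - p.1.card) (d - p.1.card) (by omega)
      have ht : ∀ i, (p.2.card - d + (p.1.card + i - p.1.card) - 1).choose (p.1.card + i - p.1.card)
            * ((d - (p.1.card + i)).choose (k - (p.1.card + i)))
          = (p.2.card - d + i - 1).choose i
            * (((d - p.1.card) - i).choose ((k - p.1.card) - i)) := by
        intro i
        have h1 : p.1.card + i - p.1.card = i := by omega
        have h2 : d - (p.1.card + i) = d - p.1.card - i := by omega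
        have h3 : k - (p.1.card + i) = k - p.1.card - i := by omega
        rw [h1, h2, h3]
      rw [Finset.sum_congr rfl (fun i _ => ht i), hkey]
      congr 1
      omega
    · rw [if_neg hak]
      apply Finset.sum_eq_zero
      intro j hj
      rw [Finset.mem_range] at hj
      rw [if_neg (by omega), zero_mul]
  have hsolve : ∀ k, k < m →
      (∑ p ∈ J, if p.1.card ≤ k then
          ((p.2.card - d + (k - p.1.card) - 1).choose (k - p.1.card)) else 0)
        = (n - d + k - 1).choose k := by
    intro k
    induction k using Nat.strong_induction_on with
    | _ k ih =>
      intro hkm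
      have hg1 := hGamma k (le_of_lt hkm)
      rw [Finset.sum_range_succ] at hg1
      simp only [Nat.sub_self, Nat.choose_zero_right, mul_one] at hg1
      have hkey := key_choose_identity (n - d) k d (le_trans (le_of_lt hkm) hmd)
      rw [Finset.sum_range_succ] at hkey
      simp only [Nat.sub_self, Nat.choose_zero_right, mul_one] at hkey
      have hdn' : d + (n - d) = n := by omega
      rw [hdn'] at hkey
      have hsums : ∑ j ∈ Finset.range k,
          (∑ p ∈ J, if p.1.card ≤ j then
              ((p.2.card - d + (j - p.1.card) - 1).choose (j - p.1.card)) else 0)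
            * ((d-j).choose (k-j))
          = ∑ j ∈ Finset.range k, (n - d + j - 1).choose j * ((d-j).choose (k-j)) := by
        apply Finset.sum_congr rfl
        intro j hj
        rw [Finset.mem_range] at hj
        rw [ih j hj (lt_trans hj hkm)]
      rw [hsums, halpha_lt k hkm] at hg1
      linarith
  have hgm := hGamma m (le_refl m)
  rw [Finset.sum_range_succ] at hgm
  simp only [Nat.sub_self, Nat.choose_zero_right, mul_one] at hgm
  have hkeym := key_choose_identity (n - d) m d hmd
  rw [Finset.sum_range_succ] at hkeym
  simp only [Nat.sub_self, Nat.choose_zero_right, mul_one] at hkeym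
  have hdn' : d + (n - d) = n := by omega
  rw [hdn'] at hkeym
  have hsums : ∑ j ∈ Finset.range m,
      (∑ p ∈ J, if p.1.card ≤ j then
          ((p.2.card - d + (j - p.1.card) - 1).choose (j - p.1.card)) else 0)
        * ((d-j).choose (m-j))
      = ∑ j ∈ Finset.range m, (n - d + j - 1).choose j * ((d-j).choose (m-j)) := by
    apply Finset.sum_congr rfl
    intro j hj
    rw [Finset.mem_range] at hj
    rw [hsolve j hj]
  rw [hsums] at hgm
  rw [← hgm] at halpha_m
  rw [← hkeym] at halpha_m
  rw [add_assoc] at halpha_m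
  have h2 := Nat.add_left_cancel halpha_m
  exact absurd hd (Nat.not_lt.mpr (h2 ▸ Nat.le_add_left g _))

/-- `U` is the set of supports of the minimal generators of a squarefree monomial ideal
generated in degree `m` with `g` generators; `P_{S/I}` consists of the subsets of `[n]`
containing no member of `U`. -/
theorem stmt5 (n m d g : ℕ) (hm : m < n)
    (U : Finset (Finset (Fin n))) (hU : ∀ u ∈ U, u.card = m) (hg : U.card = g)
    (hd : (n + m - d - 1).choose m < g) :
    ((n + m - d - 1).choose m : ℤ) - (g : ℤ) < 0 ∧
    sdepth n ((Finset.univ.powerset).filter (fun C : Finset (Fin n) => ∀ u ∈ U, ¬ u ⊆ C)) ≤ d - 1 := by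
  constructor
  · have : ((n + m - d - 1).choose m : ℤ) < (g : ℤ) := by exact_mod_cast hd
    linarith
  · set P := (Finset.univ.powerset).filter (fun C : Finset (Fin n) => ∀ u ∈ U, ¬ u ⊆ C) with hP
    have hUsub : U ⊆ Finset.powersetCard m Finset.univ := by
      intro u hu
      rw [Finset.mem_powersetCard]
      exact ⟨Finset.subset_univ u, hU u hu⟩
    have hgle : g ≤ n.choose m := by
      have := Finset.card_le_card hUsub
      rwa [hg, Finset.card_powersetCard, Finset.card_univ, Fintype.card_fin] at this
    have hm1 : 1 ≤ m := by
      by_contra h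
      have hm0 : m = 0 := by omega
      subst hm0
      have hsub : U ⊆ {∅} := by
        intro u hu
        simp [Finset.card_eq_zero.mp (hU u hu)]
      have h1 : U.card ≤ 1 := le_trans (Finset.card_le_card hsub) (by simp)
      simp only [Nat.choose_zero_right] at hd
      omega
    have hmd : m ≤ d := by
      by_contra h
      have hle : n ≤ n + m - d - 1 := by omega
      have := Nat.choose_le_choose m hle
      omega
    have halpha_lt : ∀ k, k < m → (P.filter (fun C => C.card = k)).card = n.choose k := by
      intro k hkm
      have he : P.filter (fun C => C.card = k) = Finset.powersetCard k Finset.univ := by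
        ext C
        rw [Finset.mem_filter, hP, Finset.mem_filter, Finset.mem_powersetCard]
        constructor
        · rintro ⟨⟨h1, _⟩, h3⟩
          exact ⟨Finset.subset_univ C, h3⟩
        · rintro ⟨h1, h3⟩
          refine ⟨⟨Finset.mem_powerset.mpr h1, ?_⟩, h3⟩
          intro u hu husub
          have := Finset.card_le_card husub
          rw [hU u hu, h3] at this
          omega
      rw [he, Finset.card_powersetCard, Finset.card_univ, Fintype.card_fin]
    have halpha_m : (P.filter (fun C => C.card = m)).card + g = n.choose m := by
      have he : P.filter (fun C => C.card = m) = (Finset.powersetCard m Finset.univ) \ U := by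
        ext C
        rw [Finset.mem_filter, hP, Finset.mem_filter, Finset.mem_sdiff, Finset.mem_powersetCard]
        constructor
        · rintro ⟨⟨h1, h2⟩, h3⟩
          exact ⟨⟨Finset.subset_univ C, h3⟩, fun hC => h2 C hC (Finset.Subset.refl C)⟩
        · rintro ⟨⟨h1, h3⟩, h2⟩
          refine ⟨⟨Finset.mem_powerset.mpr h1, ?_⟩, h3⟩
          intro u hu husub
          have hcard : u.card = C.card := by rw [hU u hu, h3]
          have : u = C := Finset.eq_of_subset_of_card_le husub (le_of_eq hcard.symm)
          exact h2 (this ▸ hu)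
      rw [he, Finset.card_sdiff_of_subset hUsub, Finset.card_powersetCard, Finset.card_univ,
        Fintype.card_fin, hg]
      omega
    apply csSup_le'
    rintro d' ⟨hd'n, J, hIP, htops⟩
    by_contra hcon
    push_neg at hcon
    have hdd' : d ≤ d' := by omega
    have hdn : d ≤ n := le_trans hdd' hd'n
    have hd2 : (n - d + m - 1).choose m < g := by
      have harg : n + m - d - 1 = n - d + m - 1 := by omega
      rwa [harg] at hd
    exact absurd (noPartition P halpha_lt halpha_m hmd hdn hd2 J hIP.1 hIP.2.1 hIP.2.2
      (fun p hp => le_trans hdd' (htops p hp))) not_false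
end

section
/- Let I ⊂ S = K[x_1,…,x_n] be a squarefree monomial ideal generated in degree m < n with g minimal generators. If C(n-1, m) < g, then sdepth(P_{S/I}) = m - 1, where P_{S/I} = {C ⊆ [n] : C contains the support of no generator of I}. -/
open Finset

lemma altB (K : ℕ) (hK : 1 ≤ K) : ∀ M : ℕ,
    ∑ t ∈ Finset.range (M+1), ((-1:ℤ))^(M-t) * K.choose t = (K-1).choose M := by
  intro M
  induction M with
  | zero => simp
  | succ M ih =>
    rw [Finset.sum_range_succ]
    have h1 : ∀ t ∈ Finset.range (M+1), ((-1:ℤ))^(M+1-t) * K.choose t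
        = -(((-1:ℤ))^(M-t) * K.choose t) := by
      intro t ht
      rw [Finset.mem_range] at ht
      have : M + 1 - t = (M - t) + 1 := by omega
      rw [this, pow_succ]
      ring
    rw [Finset.sum_congr rfl h1, Finset.sum_neg_distrib, ih]
    obtain ⟨K', rfl⟩ : ∃ K', K = K' + 1 := ⟨K - 1, by omega⟩
    simp only [Nat.add_sub_cancel]
    simp only [Nat.sub_self, pow_zero, mul_one, Nat.succ_eq_add_one]
    push_cast [Nat.choose_succ_succ K' M]
    ring

lemma sum_shape (K a m : ℕ) (hK : 1 ≤ K) (ha : a ≤ m) :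
    ∑ t ∈ Finset.range (K+1), (K.choose t) • (if a + t ≤ m then ((-1:ℤ))^(m-(a+t)) else 0)
      = (K-1).choose (m-a) := by
  set M := m - a with hM
  have hconv : ∀ t : ℕ, (K.choose t) • (if a + t ≤ m then ((-1:ℤ))^(m-(a+t)) else 0)
      = (if t ≤ M then ((-1:ℤ))^(M-t) else 0) * K.choose t := by
    intro t
    have h1 : (a + t ≤ m) ↔ t ≤ M := by omega
    have h2 : m - (a + t) = M - t := by omega
    rw [h2]
    by_cases h : t ≤ M
    · rw [if_pos h, if_pos (h1.mpr h)]; simp [mul_comm]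
    · rw [if_neg h, if_neg (fun hh => h (h1.mp hh))]; simp
  simp only [hconv]
  have hext1 : ∑ t ∈ Finset.range (K+1), (if t ≤ M then ((-1:ℤ))^(M-t) else 0) * K.choose t
      = ∑ t ∈ Finset.range (K+M+1), (if t ≤ M then ((-1:ℤ))^(M-t) else 0) * K.choose t := by
    apply Finset.sum_subset
    · intro x hx; simp only [Finset.mem_range] at *; omega
    · intro x _ hx
      simp only [Finset.mem_range, not_lt] at hx
      have : K.choose x = 0 := Nat.choose_eq_zero_of_lt (by omega)
      simp [this]
  have hext2 : ∑ t ∈ Finset.range (M+1), (if t ≤ M then ((-1:ℤ))^(M-t) else 0) * K.choose t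
      = ∑ t ∈ Finset.range (K+M+1), (if t ≤ M then ((-1:ℤ))^(M-t) else 0) * K.choose t := by
    apply Finset.sum_subset
    · intro x hx; simp only [Finset.mem_range] at *; omega
    · intro x _ hx
      simp only [Finset.mem_range, not_lt] at hx
      have : ¬ (x ≤ M) := by omega
      simp [this]
  rw [hext1, ← hext2]
  have := altB K hK M
  rw [← this]
  apply Finset.sum_congr rfl
  intro t ht
  rw [Finset.mem_range] at ht
  have : t ≤ M := by omega
  simp [this]

lemma icc_sum_eq {α : Type*} [DecidableEq α] (m : ℕ) (A B : Finset α) (hAB : A ⊆ B) :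
    ∑ C ∈ Finset.Icc A B, (if C.card ≤ m then ((-1:ℤ))^(m - C.card) else 0)
      = ∑ t ∈ Finset.range ((B.card - A.card)+1),
          ((B.card - A.card).choose t) •
            (if A.card + t ≤ m then ((-1:ℤ))^(m-(A.card + t)) else 0) := by
  have hbij : ∑ C ∈ Finset.Icc A B, (if C.card ≤ m then ((-1:ℤ))^(m - C.card) else 0)
      = ∑ D ∈ (B \ A).powerset, (if A.card + D.card ≤ m then ((-1:ℤ))^(m - (A.card + D.card)) else 0) := by
    apply Finset.sum_nbij' (i := fun C => C \ A) (j := fun D => A ∪ D)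
    · intro C hC
      rw [Finset.mem_Icc] at hC
      exact Finset.mem_powerset.mpr (Finset.sdiff_subset_sdiff hC.2 (le_refl _))
    · intro D hD
      rw [Finset.mem_powerset] at hD
      rw [Finset.mem_Icc]
      exact ⟨Finset.subset_union_left, Finset.union_subset hAB (hD.trans Finset.sdiff_subset)⟩
    · intro C hC
      rw [Finset.mem_Icc] at hC
      exact Finset.union_sdiff_of_subset hC.1
    · intro D hD
      rw [Finset.mem_powerset] at hD
      exact Finset.union_sdiff_cancel_left (Finset.disjoint_of_subset_right hD Finset.disjoint_sdiff)
    · intro C hC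
      rw [Finset.mem_Icc] at hC
      have h1 : A.card ≤ C.card := Finset.card_le_card hC.1
      have : A.card + (C \ A).card = C.card := by
        rw [Finset.card_sdiff_of_subset hC.1]; omega
      rw [this]
  have hcard : (B \ A).card = B.card - A.card := Finset.card_sdiff_of_subset hAB
  rw [hbij, ← hcard]
  exact Finset.sum_powerset_apply_card (fun j => (if A.card + j ≤ m then ((-1:ℤ))^(m-(A.card + j)) else 0))

lemma icc_sum_nonneg {α : Type*} [DecidableEq α] (m : ℕ) (A B : Finset α)
    (hAB : A ⊆ B) (hB : m ≤ B.card) :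
    0 ≤ ∑ C ∈ Finset.Icc A B, (if C.card ≤ m then ((-1:ℤ))^(m - C.card) else 0) := by
  rw [icc_sum_eq m A B hAB]
  set K := B.card - A.card with hK
  by_cases hK0 : K = 0
  · rw [hK0]
    have hAc : m ≤ A.card := by
      have := Finset.card_le_card hAB
      omega
    rw [Finset.sum_range_succ, Finset.range_zero, Finset.sum_empty, zero_add,
      Nat.choose_self, one_smul]
    have h0 : m - (A.card + 0) = 0 := by omega
    rw [h0]
    split <;> simp
  · by_cases ham : A.card ≤ m
    · rw [sum_shape K A.card m (by omega) ham]
      positivity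
    · apply Finset.sum_nonneg
      intro t _
      have : ¬ (A.card + t ≤ m) := by omega
      rw [if_neg this]
      simp

lemma global_sum (n m : ℕ) (hn : 1 ≤ n) (hm : m ≤ n) :
    ∑ C ∈ (Finset.univ : Finset (Fin n)).powerset,
      (if C.card ≤ m then ((-1:ℤ))^(m - C.card) else 0) = (n-1).choose m := by
  rw [Finset.sum_powerset_apply_card (fun j => (if j ≤ m then ((-1:ℤ))^(m-j) else 0))]
  rw [Finset.card_univ, Fintype.card_fin]
  have := sum_shape n 0 m hn (Nat.zero_le m)
  simp only [Nat.zero_add, Nat.sub_zero] at this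
  rw [← this]

lemma lift_mem_Icc {α : Type*} [DecidableEq α] {a : α} {A B C : Finset α}
    (hA : A ⊆ B) (haB : a ∉ B) :
    C ∈ Finset.Icc (insert a A) (insert a B) ↔ a ∈ C ∧ C.erase a ∈ Finset.Icc A B := by
  have haA : a ∉ A := fun h => haB (hA h)
  simp only [Finset.mem_Icc, Finset.le_eq_subset]
  constructor
  · rintro ⟨h1, h2⟩
    have haC : a ∈ C := h1 (Finset.mem_insert_self a A)
    refine ⟨haC, ?_, ?_⟩
    · rw [Finset.subset_erase]
      exact ⟨(Finset.insert_subset_iff.mp h1).2, haA⟩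
    · rwa [← Finset.subset_insert_iff]
  · rintro ⟨haC, h1, h2⟩
    constructor
    · rw [Finset.insert_subset_iff]
      exact ⟨haC, h1.trans (Finset.erase_subset a C)⟩
    · rwa [Finset.subset_insert_iff]

lemma exists_interval_partition {α : Type*} [DecidableEq α] :
    ∀ (s : Finset α) (d : ℕ), d ≤ s.card →
    ∃ I : Finset (Finset α × Finset α),
      (∀ p ∈ I, p.1 ⊆ p.2 ∧ p.2 ⊆ s ∧ p.2.card = d) ∧
      (∀ p ∈ I, ∀ q ∈ I, p ≠ q → Disjoint (Finset.Icc p.1 p.2) (Finset.Icc q.1 q.2)) ∧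
      (∀ C : Finset α, (C ⊆ s ∧ C.card ≤ d) ↔ ∃ p ∈ I, C ∈ Finset.Icc p.1 p.2) := by
  intro s
  induction s using Finset.cons_induction with
  | empty =>
    intro d hd
    obtain rfl : d = 0 := by simpa using hd
    refine ⟨{(∅, ∅)}, ?_, ?_, ?_⟩
    · intro p hp; simp at hp; simp [hp]
    · intro p hp q hq hpq; simp at hp hq; exact absurd (hp.trans hq.symm) hpq
    · intro C
      constructor
      · rintro ⟨hc, _⟩
        have hC0 : C = ∅ := Finset.subset_empty.mp hc
        exact ⟨(∅, ∅), Finset.mem_singleton_self _, by simp [hC0]⟩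
      · rintro ⟨p, hp, hm⟩
        rw [Finset.mem_singleton] at hp
        subst hp
        rw [Finset.mem_Icc] at hm
        have hC0 : C = ∅ := Finset.subset_empty.mp hm.2
        subst hC0
        exact ⟨Finset.empty_subset _, by simp⟩
  | cons a t ha ih =>
    intro d hd
    rw [Finset.cons_eq_insert] at *
    rcases Nat.eq_zero_or_pos d with rfl | hd0
    · refine ⟨{(∅, ∅)}, ?_, ?_, ?_⟩
      · intro p hp; simp at hp; simp [hp]
      · intro p hp q hq hpq; simp at hp hq; exact absurd (hp.trans hq.symm) hpq
      · intro C
        constructor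
        · rintro ⟨_, hc⟩
          have hC0 : C = ∅ := Finset.card_eq_zero.mp (Nat.le_zero.mp hc)
          exact ⟨(∅, ∅), Finset.mem_singleton_self _, by simp [hC0]⟩
        · rintro ⟨p, hp, hm⟩
          rw [Finset.mem_singleton] at hp
          subst hp
          rw [Finset.mem_Icc] at hm
          have hC0 : C = ∅ := Finset.subset_empty.mp hm.2
          subst hC0
          exact ⟨Finset.empty_subset _, by simp⟩
    · rcases Nat.lt_or_ge t.card d with hlt | hge
      · -- d = card (insert a t)
        have hcard : (insert a t).card = t.card + 1 := Finset.card_insert_of_notMem ha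
        have hds : d = (insert a t).card := by omega
        refine ⟨{(∅, insert a t)}, ?_, ?_, ?_⟩
        · intro p hp; simp at hp; simp [hp, hds]
        · intro p hp q hq hpq; simp at hp hq; exact absurd (hp.trans hq.symm) hpq
        · intro C
          simp only [Finset.mem_singleton, Finset.mem_Icc]
          constructor
          · rintro ⟨h, _⟩; exact ⟨(∅, insert a t), rfl, Finset.empty_subset C, h⟩
          · rintro ⟨p, rfl, _, h2⟩
            exact ⟨h2, hds ▸ Finset.card_le_card h2⟩
      · -- 0 < d ≤ t.card
        obtain ⟨e, rfl⟩ : ∃ e, d = e + 1 := ⟨d - 1, by omega⟩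
        obtain ⟨I₁, hI₁a, hI₁b, hI₁c⟩ := ih (e+1) hge
        obtain ⟨I₂, hI₂a, hI₂b, hI₂c⟩ := ih e (by omega)
        set L : Finset α × Finset α → Finset α × Finset α :=
          fun p => (insert a p.1, insert a p.2) with hL
        refine ⟨I₁ ∪ I₂.image L, ?_, ?_, ?_⟩
        · intro p hp
          rcases Finset.mem_union.mp hp with h | h
          · obtain ⟨h1, h2, h3⟩ := hI₁a p h
            exact ⟨h1, h2.trans (Finset.subset_insert a t), h3⟩
          · obtain ⟨q, hq, rfl⟩ := Finset.mem_image.mp h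
            obtain ⟨h1, h2, h3⟩ := hI₂a q hq
            refine ⟨Finset.insert_subset_insert a h1, Finset.insert_subset_insert a h2, ?_⟩
            rw [Finset.card_insert_of_notMem (fun hc => ha (h2 hc)), h3]
        · -- disjointness
          have key1 : ∀ p ∈ I₁, ∀ C ∈ Finset.Icc p.1 p.2, a ∉ C := by
            intro p hp C hC hac
            obtain ⟨_, h2, _⟩ := hI₁a p hp
            exact ha (h2 ((Finset.mem_Icc.mp hC).2 hac))
          have key2 : ∀ q ∈ I₂, ∀ C ∈ Finset.Icc (L q).1 (L q).2, a ∈ C := by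
            intro q hq C hC
            obtain ⟨h1, h2, _⟩ := hI₂a q hq
            exact ((lift_mem_Icc h1 (fun hc => ha (h2 hc))).mp hC).1
          intro p hp q hq hpq
          rw [Finset.disjoint_left]
          intro C hCp hCq
          rcases Finset.mem_union.mp hp with h₁ | h₁ <;>
            rcases Finset.mem_union.mp hq with h₂ | h₂
          · exact (Finset.disjoint_left.mp (hI₁b p h₁ q h₂ hpq) hCp) hCq
          · obtain ⟨q', hq', rfl⟩ := Finset.mem_image.mp h₂
            exact key1 p h₁ C hCp (key2 q' hq' C hCq)
          · obtain ⟨p', hp', rfl⟩ := Finset.mem_image.mp h₁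
            exact key1 q h₂ C hCq (key2 p' hp' C hCp)
          · obtain ⟨p', hp', rfl⟩ := Finset.mem_image.mp h₁
            obtain ⟨q', hq', rfl⟩ := Finset.mem_image.mp h₂
            have hpq' : p' ≠ q' := by
              rintro rfl; exact hpq rfl
            obtain ⟨hp1, hp2, _⟩ := hI₂a p' hp'
            obtain ⟨hq1, hq2, _⟩ := hI₂a q' hq'
            have h1 := (lift_mem_Icc hp1 (fun hc => ha (hp2 hc))).mp hCp
            have h2 := (lift_mem_Icc hq1 (fun hc => ha (hq2 hc))).mp hCq
            exact (Finset.disjoint_left.mp (hI₂b p' hp' q' hq' hpq') h1.2) h2.2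
        · -- cover
          intro C
          constructor
          · rintro ⟨hCs, hCc⟩
            by_cases hac : a ∈ C
            · have hC' : C.erase a ⊆ t := by
                rw [← Finset.subset_insert_iff]; exact hCs
              have hC'c : (C.erase a).card ≤ e := by
                rw [Finset.card_erase_of_mem hac]; omega
              obtain ⟨p, hp, hmem⟩ := (hI₂c (C.erase a)).mp ⟨hC', hC'c⟩
              obtain ⟨h1, h2, _⟩ := hI₂a p hp
              refine ⟨L p, Finset.mem_union_right _ (Finset.mem_image_of_mem L hp), ?_⟩
              exact (lift_mem_Icc h1 (fun hc => ha (h2 hc))).mpr ⟨hac, hmem⟩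
            · have hCt : C ⊆ t := fun x hx => by
                rcases Finset.mem_insert.mp (hCs hx) with rfl | h
                · exact absurd hx hac
                · exact h
              obtain ⟨p, hp, hmem⟩ := (hI₁c C).mp ⟨hCt, hCc⟩
              exact ⟨p, Finset.mem_union_left _ hp, hmem⟩
          · rintro ⟨p, hp, hmem⟩
            rcases Finset.mem_union.mp hp with h | h
            · obtain ⟨h1, h2, h3⟩ := hI₁a p h
              have := (hI₁c C).mpr ⟨p, h, hmem⟩
              exact ⟨this.1.trans (Finset.subset_insert a t), this.2⟩
            · obtain ⟨q, hq, rfl⟩ := Finset.mem_image.mp h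
              obtain ⟨h1, h2, h3⟩ := hI₂a q hq
              have hl := (lift_mem_Icc h1 (fun hc => ha (h2 hc))).mp hmem
              have := (hI₂c (C.erase a)).mpr ⟨q, hq, hl.2⟩
              constructor
              · intro x hx
                rcases eq_or_ne x a with heq | hxa
                · rw [heq]; exact Finset.mem_insert_self a t
                · exact Finset.mem_insert_of_mem (this.1 (Finset.mem_erase.mpr ⟨hxa, hx⟩))
              · have := this.2
                rw [Finset.card_erase_of_mem hl.1] at this
                omega

theorem stmt6 (n m g : ℕ) (hm : m < n)
    (U : Finset (Finset (Fin n))) (hU : ∀ u ∈ U, u.card = m) (hg : U.card = g)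
    (hbound : (n - 1).choose m < g) :
    sdepth n ((Finset.univ.powerset).filter (fun C : Finset (Fin n) => ∀ u ∈ U, ¬ u ⊆ C)) = m - 1 := by
  classical
  set P := (Finset.univ.powerset).filter (fun C : Finset (Fin n) => ∀ u ∈ U, ¬ u ⊆ C) with hP
  have hPmem : ∀ C : Finset (Fin n), C ∈ P ↔ ∀ u ∈ U, ¬ u ⊆ C := by
    intro C
    simp [hP, Finset.mem_filter, Finset.mem_powerset]
  have hm1 : 1 ≤ m := by
    by_contra h
    push_neg at h
    obtain rfl : m = 0 := by omega
    have hsub : U ⊆ {∅} := by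
      intro u hu
      rw [Finset.mem_singleton]
      exact Finset.card_eq_zero.mp (hU u hu)
    have := Finset.card_le_card hsub
    rw [hg] at this
    simp at this
    simp at hbound
    omega
  have hsmall : ∀ C : Finset (Fin n), C.card < m → C ∈ P := by
    intro C hC
    rw [hPmem]
    intro u hu hsub
    have := Finset.card_le_card hsub
    rw [hU u hu] at this
    omega
  set S : Set ℕ := {d | d ≤ n ∧ ∃ I, IsIntervalPartition n P I ∧ ∀ p ∈ I, d ≤ p.2.card} with hS
  -- lower bound: m - 1 ∈ S
  have hmemS : m - 1 ∈ S := by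
    obtain ⟨I₀, hI₀a, hI₀b, hI₀c⟩ := exists_interval_partition (Finset.univ : Finset (Fin n)) (m-1)
      (by rw [Finset.card_univ, Fintype.card_fin]; omega)
    set I : Finset (Finset (Fin n) × Finset (Fin n)) :=
      I₀ ∪ (P.filter (fun C => m ≤ C.card)).image (fun C => (C, C)) with hI
    have hbig : ∀ p ∈ (P.filter (fun C => m ≤ C.card)).image
        (fun C : Finset (Fin n) => (C, C)), p.1 = p.2 ∧ p.2 ∈ P ∧ m ≤ p.2.card := by
      intro p hp
      obtain ⟨C, hC, rfl⟩ := Finset.mem_image.mp hp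
      rw [Finset.mem_filter] at hC
      exact ⟨rfl, hC.1, hC.2⟩
    have hsmall_mem : ∀ p ∈ I₀, ∀ A ∈ Finset.Icc p.1 p.2, A.card ≤ m - 1 := by
      intro p hp A hA
      obtain ⟨_, _, h3⟩ := hI₀a p hp
      rw [Finset.mem_Icc] at hA
      calc A.card ≤ p.2.card := Finset.card_le_card hA.2
        _ = m - 1 := h3
    refine ⟨by omega, I, ⟨?_, ?_, ?_⟩, ?_⟩
    · intro p hp
      rcases Finset.mem_union.mp hp with h | h
      · exact (hI₀a p h).1
      · rw [(hbig p h).1]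
    · intro p hp q hq hpq
      rw [Finset.disjoint_left]
      intro A hAp hAq
      rcases Finset.mem_union.mp hp with h₁ | h₁ <;>
        rcases Finset.mem_union.mp hq with h₂ | h₂
      · exact (Finset.disjoint_left.mp (hI₀b p h₁ q h₂ hpq) hAp) hAq
      · have h1 := hsmall_mem p h₁ A hAp
        obtain ⟨he, _, hc⟩ := hbig q h₂
        rw [← he, Finset.Icc_self, Finset.mem_singleton] at hAq
        subst hAq
        rw [he] at h1
        omega
      · have h1 := hsmall_mem q h₂ A hAq
        obtain ⟨he, _, hc⟩ := hbig p h₁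
        rw [← he, Finset.Icc_self, Finset.mem_singleton] at hAp
        subst hAp
        rw [he] at h1
        omega
      · obtain ⟨C, hC, rfl⟩ := Finset.mem_image.mp h₁
        obtain ⟨D, hD, rfl⟩ := Finset.mem_image.mp h₂
        rw [Finset.Icc_self, Finset.mem_singleton] at hAp hAq
        have hCD : C = D := by simpa using hAp.symm.trans hAq
        subst hCD
        exact hpq rfl
    · intro A
      constructor
      · intro hA
        by_cases hcard : A.card < m
        · obtain ⟨p, hp, hmem⟩ := (hI₀c A).mp ⟨Finset.subset_univ A, by omega⟩
          exact ⟨p, Finset.mem_union_left _ hp, hmem⟩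
        · refine ⟨(A, A), Finset.mem_union_right _ ?_, by simp⟩
          exact Finset.mem_image_of_mem _ (Finset.mem_filter.mpr ⟨hA, by omega⟩)
      · rintro ⟨p, hp, hmem⟩
        rcases Finset.mem_union.mp hp with h | h
        · have := hsmall_mem p h A hmem
          exact hsmall A (by omega)
        · obtain ⟨he, hPq, _⟩ := hbig p h
          rw [← he, Finset.Icc_self, Finset.mem_singleton] at hmem
          subst hmem
          rwa [he]
    · intro p hp
      rcases Finset.mem_union.mp hp with h | h
      · exact le_of_eq (hI₀a p h).2.2.symm
      · have := (hbig p h).2.2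
        omega
  -- upper bound: every element of S is ≤ m - 1
  have hubS : ∀ d ∈ S, d ≤ m - 1 := by
    intro d hd
    by_contra hcon
    push_neg at hcon
    have hdm : m ≤ d := by omega
    obtain ⟨hdn, I, ⟨hIa, hIb, hIc⟩, htops⟩ := hd
    set w : Finset (Fin n) → ℤ := fun C => if C.card ≤ m then ((-1:ℤ))^(m - C.card) else 0 with hw
    have hglobal : ∑ C ∈ (Finset.univ : Finset (Fin n)).powerset, w C = (n-1).choose m :=
      global_sum n m (by omega) (by omega)
    have hPsub : P ⊆ (Finset.univ : Finset (Fin n)).powerset := Finset.filter_subset _ _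
    have hUsub : U ⊆ (Finset.univ : Finset (Fin n)).powerset \ P := by
      intro u hu
      rw [Finset.mem_sdiff]
      refine ⟨Finset.mem_powerset.mpr (Finset.subset_univ u), ?_⟩
      intro hP'
      exact (hPmem u).mp hP' u hu (Finset.Subset.refl u)
    have hdiff : ∑ C ∈ (Finset.univ : Finset (Fin n)).powerset \ P, w C = ∑ C ∈ U, w C := by
      symm
      apply Finset.sum_subset hUsub
      intro x hx hxU
      rw [Finset.mem_sdiff] at hx
      have hx2 := hx.2
      rw [hPmem] at hx2
      push_neg at hx2
      obtain ⟨u, hu, husub⟩ := hx2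
      have h1 : m ≤ x.card := by
        have := Finset.card_le_card husub
        rw [hU u hu] at this
        exact this
      have h2 : ¬ (x.card ≤ m) := by
        intro h
        have : x = u := by
          symm
          apply Finset.eq_of_subset_of_card_le husub
          rw [hU u hu]; omega
        exact hxU (this ▸ hu)
      simp [hw, h2]
    have hUsum : ∑ C ∈ U, w C = g := by
      rw [← hg]
      rw [Finset.card_eq_sum_ones U]
      push_cast
      apply Finset.sum_congr rfl
      intro u hu
      have := hU u hu
      simp [hw, this]
    have hsplit : ∑ C ∈ (Finset.univ : Finset (Fin n)).powerset \ P, w C + ∑ C ∈ P, w C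
        = ∑ C ∈ (Finset.univ : Finset (Fin n)).powerset, w C := Finset.sum_sdiff hPsub
    have hPbi : P = I.biUnion (fun p => Finset.Icc p.1 p.2) := by
      ext A
      rw [Finset.mem_biUnion]
      exact hIc A
    have hPsum : 0 ≤ ∑ C ∈ P, w C := by
      rw [hPbi, Finset.sum_biUnion (fun p hp q hq hpq => hIb p hp q hq hpq)]
      apply Finset.sum_nonneg
      intro p hp
      exact icc_sum_nonneg m p.1 p.2 (hIa p hp) (le_trans hdm (htops p hp))
    have : (g : ℤ) ≤ (n-1).choose m := by omega
    have : g ≤ (n-1).choose m := by exact_mod_cast this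
    omega
  -- conclude
  show sSup S = m - 1
  apply le_antisymm
  · exact csSup_le ⟨m - 1, hmemS⟩ hubS
  · exact le_csSup ⟨n, fun d hd => hd.1⟩ hmemS
end

section
/- For the maximal ideal poset P = 2^[n] \ {∅} with d = ⌈n/2⌉ + 1, the quantity β_2 = C(n,2) - n·(d-1) is negative for n ≥ 1. Consequently qdepth of the maximal ideal (x_1,…,x_n) equals ⌈n/2⌉. -/
/-!
`qbeta α d` solves the triangular system `α_k = ∑_{j ≤ k} β_j C(d-j, k-j)`. For the maximal
ideal, `α_k = C(n,k) - [k = 0]`, and for `d ≤ n` the solution is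
`β_k = multichoose (n-d) k - (-1)^k C(d,k)`: upward Chu–Vandermonde produces the first term,
the alternating binomial sum the second. At `d = ⌈n/2⌉` we have `d ≤ n - d + 1`, so the first
term dominates for even `k ≥ 2` and every `β_k` is non-negative; for larger `d` already
`β_2 = C(n,2) - n(d-1) < 0`.
-/

/-- The sequence `β_k` of the quasi-depth computation: `β_0 = α_0` and
`β_k = α_k - ∑_{j<k} β_j C(d-j, k-j)`. -/
def qbeta (α : ℕ → ℤ) (d : ℕ) : ℕ → ℤ
  | k => α k - ∑ j ∈ (Finset.range k).attach,
      qbeta α d j.1 * (((d - j.1).choose (k - j.1) : ℕ) : ℤ)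
  termination_by k => k
  decreasing_by exact Finset.mem_range.mp j.2

/-- The quasi-depth of a family `P ⊆ 2^[n]`: the largest `d ≤ n` such that the numbers
`β_0, …, β_d` computed from `α_k = #{A ∈ P : |A| = k}` are all non-negative. -/
noncomputable def qdepth (n : ℕ) (P : Finset (Finset (Fin n))) : ℕ :=
  sSup {d | d ≤ n ∧ ∀ k ≤ d,
    0 ≤ qbeta (fun k => ((P.filter (fun A => A.card = k)).card : ℤ)) d k}

open Finset

/-- Chu–Vandermonde at negative arguments, since `multichoose r i = (-1)^i C(-r, i)`. -/
theorem Nat.sum_antidiagonal_multichoose (m n k : ℕ) :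
    ∑ ij ∈ antidiagonal k, m.multichoose ij.1 * n.multichoose ij.2 = (m + n).multichoose k := by
  have hcast (r i : ℕ) :
      (r.multichoose i : ℤ) = Int.negOnePow i • Ring.choose (-(r : ℤ)) i := by
    rw [Ring.choose_neg', smul_smul, ← Int.negOnePow_add, Int.negOnePow_even _ (by simp),
      one_smul, Nat.multichoose_eq]
    rfl
  apply Nat.cast_injective (R := ℤ)
  push_cast
  simp only [hcast, Nat.cast_add, neg_add,
    Ring.add_choose_eq (R := ℤ) k (Commute.all (-(m : ℤ)) (-(n : ℤ))), smul_sum]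
  refine sum_congr rfl fun ij hij => ?_
  rw [← mem_antidiagonal.mp hij, Nat.cast_add, Int.negOnePow_add, Units.smul_def, Units.smul_def,
    Units.smul_def]
  push_cast
  ring

theorem Nat.sum_range_multichoose_mul_choose_s7 {k d : ℕ} (e : ℕ) (hk : k ≤ d) :
    ∑ j ∈ range (k + 1), e.multichoose j * (d - j).choose (k - j) = (d + e).choose k := by
  have h := Nat.sum_antidiagonal_multichoose e (d - k + 1) k
  rw [Nat.sum_antidiagonal_eq_sum_range_succ
      (fun i j => e.multichoose i * (d - k + 1).multichoose j),
    Nat.multichoose_eq, show e + (d - k + 1) + k - 1 = d + e by omega] at h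
  rw [← h]
  refine sum_congr rfl fun j hj => ?_
  rw [Nat.multichoose_eq (d - k + 1), show d - k + 1 + (k - j) - 1 = d - j by grind]

theorem sum_range_neg_one_pow_mul_choose_mul_choose (k d : ℕ) :
    ∑ j ∈ range (k + 1), (-1 : ℤ) ^ j * d.choose j * (d - j).choose (k - j) =
      if k = 0 then 1 else 0 := by
  have h (j) (hj : j ∈ range (k + 1)) : (-1 : ℤ) ^ j * d.choose j * (d - j).choose (k - j) =
      d.choose k * ((-1) ^ j * k.choose j) := by
    rw [mul_assoc, ← Nat.cast_mul, ← Nat.choose_mul (Nat.lt_succ_iff.mp (mem_range.mp hj))]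
    push_cast
    ring
  rw [sum_congr rfl h, ← mul_sum, Int.alternating_sum_range_choose]
  split_ifs with h0 <;> simp [h0]

theorem qbeta_eq_sub_sum (α : ℕ → ℤ) (d k : ℕ) :
    qbeta α d k = α k - ∑ j ∈ range k, qbeta α d j * ((d - j).choose (k - j) : ℤ) := by
  rw [qbeta, sum_attach (range k) fun j => qbeta α d j * ((d - j).choose (k - j) : ℤ)]

theorem qbeta_eq_of_sum_eq {α β : ℕ → ℤ} {d K : ℕ}
    (h : ∀ k ≤ K, ∑ j ∈ range (k + 1), β j * ((d - j).choose (k - j) : ℤ) = α k) :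
    ∀ k ≤ K, qbeta α d k = β k := by
  intro k
  induction k using Nat.strong_induction_on with
  | _ k ih =>
    intro hk
    have hprev : ∑ j ∈ range k, qbeta α d j * ((d - j).choose (k - j) : ℤ) =
        ∑ j ∈ range k, β j * ((d - j).choose (k - j) : ℤ) :=
      sum_congr rfl fun j hj => by
        rw [ih j (mem_range.mp hj) ((mem_range.mp hj).le.trans hk)]
    rw [qbeta_eq_sub_sum, hprev, ← h k hk, sum_range_succ]
    simp

theorem qbeta_two {α : ℕ → ℤ} (d : ℕ) (hα : α 0 = 0) :
    qbeta α d 2 = α 2 - α 1 * (d - 1 : ℕ) := by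
  have h0 : qbeta α d 0 = 0 := by rw [qbeta_eq_sub_sum]; simp [hα]
  have h1 : qbeta α d 1 = α 1 := by rw [qbeta_eq_sub_sum]; simp [h0]
  rw [qbeta_eq_sub_sum]
  simp [sum_range_succ, h0, h1]

theorem qbeta_eq_multichoose_sub {n d : ℕ} {α : ℕ → ℤ} (hd : d ≤ n)
    (hα : ∀ k, α k = n.choose k - if k = 0 then 1 else 0) :
    ∀ k ≤ d, qbeta α d k = (n - d).multichoose k - (-1) ^ k * d.choose k := by
  refine qbeta_eq_of_sum_eq fun k hk => ?_
  have hfull := Nat.sum_range_multichoose_mul_choose_s7 (n - d) hk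
  rw [Nat.add_sub_cancel' hd] at hfull
  simp only [sub_mul, sum_sub_distrib, hα, sum_range_neg_one_pow_mul_choose_mul_choose, ← hfull,
    Nat.cast_sum, Nat.cast_mul]

theorem multichoose_sub_neg_one_pow_mul_choose_nonneg {d e : ℕ} (h : d ≤ e + 1) (k : ℕ) :
    0 ≤ (e.multichoose k : ℤ) - (-1) ^ k * d.choose k := by
  rcases Nat.even_or_odd k with hk | hk
  · rw [hk.neg_one_pow, one_mul, sub_nonneg, Nat.cast_le, Nat.multichoose_eq]
    rcases k with _ | k
    · simp
    · exact Nat.choose_le_choose _ (by obtain ⟨m, hm⟩ := hk; omega)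
  · rw [hk.neg_one_pow, neg_one_mul, sub_neg_eq_add]
    positivity

theorem card_filter_card_eq_of_ne_empty (n k : ℕ) :
    (#{A ∈ {A ∈ (univ : Finset (Fin n)).powerset | A ≠ ∅} | #A = k} : ℤ) =
      n.choose k - if k = 0 then 1 else 0 := by
  rw [filter_filter]
  split_ifs with hk
  · subst hk
    simp [card_eq_zero]
  · have : ∀ A : Finset (Fin n), A ≠ ∅ ∧ #A = k ↔ #A = k := fun A =>
      ⟨And.right, fun h => ⟨fun h0 => hk (by rw [← h, h0, card_empty]), h⟩⟩
    simp only [this, ← powersetCard_eq_filter, card_powersetCard, card_univ, Fintype.card_fin,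
      sub_zero]

theorem Nat.choose_two_lt_mul_ceil_half {n : ℕ} (hn : 1 ≤ n) :
    n.choose 2 < n * ((n + 1) / 2) := by
  rw [Nat.choose_two_right, Nat.div_lt_iff_lt_mul two_pos, mul_assoc]
  exact Nat.mul_lt_mul_of_pos_left (by omega) hn

/-- For the poset of the maximal ideal `(x_1,…,x_n)` and `d = ⌈n/2⌉ + 1`, one has
`β_2 = C(n,2) - n(d-1) < 0`; consequently `qdepth(m) = ⌈n/2⌉`. -/
theorem stmt7 (n : ℕ) (hn : 1 ≤ n) :
    (n.choose 2 : ℤ) - (n : ℤ) * (((n + 1) / 2 : ℕ) : ℤ) < 0 ∧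
    qdepth n ((Finset.univ.powerset).filter (fun A : Finset (Fin n) => A ≠ ∅)) = (n + 1) / 2 := by
  have hcard := card_filter_card_eq_of_ne_empty n
  have hneg : (n.choose 2 : ℤ) - n * ((n + 1) / 2 : ℕ) < 0 :=
    sub_neg.mpr (by exact_mod_cast Nat.choose_two_lt_mul_ceil_half hn)
  refine ⟨hneg, IsGreatest.csSup_eq ⟨⟨by omega, fun k hk => ?_⟩, ?_⟩⟩
  · rw [qbeta_eq_multichoose_sub (by omega) hcard k hk]
    exact multichoose_sub_neg_one_pow_mul_choose_nonneg (by omega) k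
  · rintro d ⟨-, hβ⟩
    by_contra! hd
    have hβ2 := hβ 2 (by omega)
    rw [qbeta_two d (by simp), hcard, hcard] at hβ2
    have hmono : (n : ℤ) * ((n + 1) / 2 : ℕ) ≤ n * (d - 1 : ℕ) := by gcongr; omega
    simp only [OfNat.ofNat_ne_zero, one_ne_zero, if_false, sub_zero, Nat.choose_one_right] at hβ2
    linarith
end

section
/- Let n, m, d be positive integers with m ≤ n. If d ≥ ⌈(n-m)/(m+1)⌉ + m, then C(n, m+1) - d·C(n, m) < 0. -/
theorem stmt8 (n m d : ℕ) (hm : 1 ≤ m) (hn : 1 ≤ n) (hd : 1 ≤ d) (hmn : m ≤ n)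
    (h : (n - m + (m + 1) - 1) / (m + 1) + m ≤ d) :
    (n.choose (m + 1) : ℤ) - (d : ℤ) * (n.choose m : ℤ) < 0 := by
  have hc1 : 0 < n.choose m := Nat.choose_pos hmn
  have h1 : n.choose (m+1) * (m+1) = n.choose m * (n - m) := Nat.choose_succ_right_eq n m
  set c := (n - m + (m + 1) - 1) / (m + 1) with hc
  set k := n - m with hk
  have hdm := Nat.div_add_mod (k + (m + 1) - 1) (m + 1)
  have hmod := Nat.mod_lt (k + (m + 1) - 1) (show 0 < m + 1 by omega)
  have h3 : k + m < (c + 1) * (m + 1) := by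
    have e1 : k + (m + 1) - 1 = k + m := by omega
    have hc' : c = (k + m) / (m + 1) := by rw [hc, e1]
    rw [e1] at hdm hmod
    rw [← hc'] at hdm
    nlinarith [hdm, hmod]
  have hb : (c + m) * (m + 1) ≤ d * (m + 1) := Nat.mul_le_mul_right _ h
  have h2 : k < d * (m + 1) := by nlinarith [h3, hb, hm]
  have key : n.choose (m+1) * (m+1) < d * n.choose m * (m+1) := by
    calc n.choose (m+1) * (m+1) = n.choose m * k := h1
      _ < n.choose m * (d * (m+1)) := mul_lt_mul_of_pos_left h2 hc1
      _ = d * n.choose m * (m+1) := by ring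
  have key2 : n.choose (m+1) < d * n.choose m := lt_of_mul_lt_mul_right key (by omega)
  have key3 : (n.choose (m+1) : ℤ) < (d : ℤ) * (n.choose m : ℤ) := by exact_mod_cast key2
  linarith
end
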